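/- The generalized Borel transform intertwines M_r with P_{r,0}: for φ ∈ L²(ℝ⁺, t e^{-t}dt) and x ∈ (0,1], one has (P_{r,0} B[φ])(x) = (B[M_r φ])(x), where (P_{r,0} f)(x) = ρ/(ρ+rx)² f(x/(ρ+rx)), (M_r φ)(t) = (1/ρ) e^{-(r/ρ)t} φ(t/ρ), and ρ = 2-r ∈ (1,2]. -/

import Mathlib

open MeasureTheory

noncomputable def lagMeasure : Measure ℝ :=
  (volume.restrict (Set.Ioi (0:ℝ))).withDensity (fun t => ENNReal.ofReal (t * Real.exp (-t)))

/-- The generalized Borel transform. -/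
noncomputable def borelT (φ : ℝ → ℝ) (x : ℝ) : ℝ :=
  (1/x^2) * ∫ t in Set.Ioi (0:ℝ), Real.exp (-t/x) * Real.exp t * φ t * (t * Real.exp (-t))

/-!
Once `exp t * exp (-t)` cancels, `B` is integration against the kernel `exp (-t / x) * t / x ^ 2`.
The weight `exp (-(r/ρ) t)` merely shifts `1 / x` by `r / ρ`, and the dilation `t ↦ t / ρ` is
absorbed by the homogeneity of the kernel; together they move the point `x` to `x / (ρ + r x)`
and produce the factor `ρ / (ρ + r x) ^ 2`.
-/

open Real Set

lemma borelT_eq (φ : ℝ → ℝ) (x : ℝ) :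
    borelT φ x = (∫ t in Ioi (0:ℝ), exp (-t / x) * φ t * t) / x ^ 2 := by
  have hkernel : ∀ t, exp (-t / x) * exp t * φ t * (t * exp (-t)) = exp (-t / x) * φ t * t :=
    fun t => by rw [exp_neg]; field_simp
  simp only [borelT, hkernel]
  ring

lemma borelT_const_mul (k : ℝ) (φ : ℝ → ℝ) (x : ℝ) :
    borelT (fun t => k * φ t) x = k * borelT φ x := by
  have hkernel : ∀ t, exp (-t / x) * (k * φ t) * t = k * (exp (-t / x) * φ t * t) :=
    fun t => by ring
  simp only [borelT_eq, hkernel, integral_const_mul]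
  ring

lemma borelT_exp_mul (a : ℝ) (φ : ℝ → ℝ) {x : ℝ} (hax : 1 + a * x ≠ 0) :
    borelT (fun t => exp (-a * t) * φ t) x
      = (1 + a * x)⁻¹ ^ 2 * borelT φ (x / (1 + a * x)) := by
  rcases eq_or_ne x 0 with rfl | hx
  · simp [borelT]
  have hkernel : ∀ t, exp (-t / x) * (exp (-a * t) * φ t) * t
      = exp (-t / (x / (1 + a * x))) * φ t * t := by
    intro t
    rw [← mul_assoc, ← exp_add]
    congr 3
    field_simp
    ring
  simp only [borelT_eq, hkernel]
  generalize ∫ t in Ioi (0:ℝ), exp (-t / (x / (1 + a * x))) * φ t * t = I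
  rw [div_pow, inv_pow, div_div_eq_mul_div, mul_comm I, ← mul_div_assoc,
    inv_mul_cancel_left₀ (pow_ne_zero 2 hax)]

/- The kernel `exp (-t / x) * t / x ^ 2` is homogeneous of degree `-1` in `(t, x)`, so it
absorbs the change of variables `t = c * s`. -/
lemma borelT_comp_div (φ : ℝ → ℝ) {c : ℝ} (hc : 0 < c) (x : ℝ) :
    borelT (fun t => φ (t / c)) x = borelT φ (x / c) := by
  have hsubst := integral_comp_mul_left_Ioi' (fun t => exp (-t / x) * φ (t / c) * t) 0 hc
  have hkernel : ∀ s, exp (-(c * s) / x) * φ (c * s / c) * (c * s)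
      = c * (exp (-s / (x / c)) * φ s * s) := by
    intro s
    have hexponent : -(c * s) / x = -s / (x / c) := by field_simp
    rw [mul_div_cancel_left₀ s hc.ne', hexponent]
    ring
  simp only [hkernel, integral_const_mul, mul_zero, smul_eq_mul] at hsubst
  rw [borelT_eq, borelT_eq, ← hsubst]
  field_simp

theorem stmt_16 :
    ∀ r ∈ Set.Ico (0:ℝ) 1,
      let ρ := 2 - r
      ∀ φ : ℝ → ℝ, MemLp φ 2 lagMeasure →
        ∀ x ∈ Set.Ioc (0:ℝ) 1,
          ρ / (ρ + r * x)^2 * borelT φ (x / (ρ + r * x))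
            = borelT (fun t => (1/ρ) * Real.exp (-(r/ρ) * t) * φ (t/ρ)) x := by
  intro r hr ρ φ _ x hx
  have hρ : 0 < ρ := by simp only [ρ]; linarith [hr.2]
  have hd : 0 < ρ + r * x := by nlinarith [hr.1, hx.1]
  have hscale : 1 + r / ρ * x = (ρ + r * x) / ρ := by field_simp
  have hax : 1 + r / ρ * x ≠ 0 := hscale ▸ div_ne_zero hd.ne' hρ.ne'
  have hpoint : x / ((ρ + r * x) / ρ) / ρ = x / (ρ + r * x) := by field_simp
  simp only [mul_assoc (1 / ρ), borelT_const_mul, borelT_exp_mul _ (fun t => φ (t / ρ)) hax,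
    borelT_comp_div φ hρ, hscale, hpoint]
  field_simp
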